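/- arXiv:2203.04124 — 2 statements merged into one kernel-verified Lean document; each statement's English description precedes it below -/
import Mathlib

section
/- Let L be a linear functional on the real vector space F = {x ↦ x† G x : G Hermitian n×n} of functions on the unit sphere of ℂⁿ. Then L satisfies L(g) ≥ inf g for all g ∈ F if and only if there exists a Hermitian positive semidefinite matrix M with Tr(M) = 1 such that L(x ↦ x†Gx) = Tr(GM) for every Hermitian G. -/
/-!
Forward direction: the Hermitian part `a ↦ (a + a†)/2` extends `L` to a real functional on all
matrices, which extends further to a `ℂ`-linear functional, and every `ℂ`-linear functional on
matrices is `A ↦ Tr(AM)`. Evaluating the hypothesis at `±1` gives `Tr M = L 1 = 1`, and at the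
projectors `vv†` it gives `v†Mv = L(vv†) ≥ 0`.

Backward direction: with `c` the infimum over the sphere, `G - c•1` is positive semidefinite
(rescale any vector to the sphere), so `0 ≤ Tr((G - c•1)M) = Tr(GM) - c`.
-/

open Matrix
open scoped ComplexOrder

section SelfAdjointExtension

variable {A : Type*} [AddCommGroup A] [Module ℂ A] [Module ℝ A] [IsScalarTower ℝ ℂ A]
  [StarAddMonoid A] [StarModule ℂ A] [StarModule ℝ A]

theorem exists_dual_eq_on_selfAdjoint (L : A → ℝ)
    (hadd : ∀ a b, IsSelfAdjoint a → IsSelfAdjoint b → L (a + b) = L a + L b)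
    (hsmul : ∀ (c : ℝ) a, IsSelfAdjoint a → L (c • a) = c * L a) :
    ∃ f : Module.Dual ℂ A, ∀ a, IsSelfAdjoint a → f a = L a := by
  let Lsa : selfAdjoint A →ₗ[ℝ] ℝ :=
    { toFun := fun a => L a
      map_add' := fun a b => hadd a b a.2 b.2
      map_smul' := fun c a => hsmul c a a.2 }
  let fr : Module.Dual ℝ A := Lsa ∘ₗ selfAdjointPart ℝ
  have hfr {a : A} (ha : IsSelfAdjoint a) : fr a = L a := by
    simp [fr, Lsa, ha.selfAdjointPart_apply ℝ]
  have hfr_I {a : A} (ha : IsSelfAdjoint a) : fr (Complex.I • a) = 0 := by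
    have : selfAdjointPart ℝ (Complex.I • a) = 0 := by
      ext
      simp [selfAdjointPart_apply_coe, star_smul, ha.star_eq]
    simp [fr, this]
  exact ⟨fr.extendRCLike, fun a ha => by
    simp [Module.Dual.extendRCLike_apply, hfr ha, hfr_I ha]⟩

end SelfAdjointExtension

theorem Matrix.exists_eq_trace_mul {ι R : Type*} [Fintype ι] [DecidableEq ι] [CommSemiring R]
    (f : Module.Dual R (Matrix ι ι R)) : ∃ M : Matrix ι ι R, ∀ A, f A = (A * M).trace := by
  let M : Matrix ι ι R := of fun i j => f (single j i 1)
  have hf : f = traceLinearMap ι R R ∘ₗ LinearMap.mulRight R M :=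
    ext_linearMap (h := fun i j => LinearMap.ext_ring (by simp [M, trace_single_mul]))
  exact ⟨M, fun A => LinearMap.congr_fun hf A⟩

theorem Matrix.posSemidef_of_forall_dotProduct_mulVec_nonneg {ι : Type*} [Fintype ι]
    {M : Matrix ι ι ℂ} (hM : ∀ x, 0 ≤ star x ⬝ᵥ M *ᵥ x) : M.PosSemidef := by
  classical
  rw [← isPositive_toEuclideanLin_iff, LinearMap.isPositive_iff_complex]
  intro x
  obtain ⟨hre, him⟩ := Complex.nonneg_iff.mp (hM x)
  have hconj : x.ofLp ⬝ᵥ star (M *ᵥ x.ofLp) = star (star x.ofLp ⬝ᵥ M *ᵥ x.ofLp) := by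
    rw [star_dotProduct, star_star, dotProduct_comm]
  simp only [EuclideanSpace.inner_eq_star_dotProduct, toLpLin_apply, hconj]
  simp [Complex.ext_iff, hre, ← him]

theorem Matrix.PosSemidef.trace_mul_nonneg {ι 𝕜 : Type*} [Fintype ι] [RCLike 𝕜]
    {A B : Matrix ι ι 𝕜} (hA : A.PosSemidef) (hB : B.PosSemidef) : 0 ≤ (A * B).trace := by
  classical
  open scoped MatrixOrder in
  obtain ⟨C, rfl⟩ := CStarAlgebra.nonneg_iff_eq_star_mul_self.mp hB.nonneg
  rw [← Matrix.mul_assoc, trace_mul_cycle]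
  exact (hA.mul_mul_conjTranspose_same C).trace_nonneg

theorem Matrix.trace_vecMulVec_mul {ι R : Type*} [Fintype ι] [CommSemiring R]
    (a b : ι → R) (M : Matrix ι ι R) : (vecMulVec a b * M).trace = b ⬝ᵥ M *ᵥ a := by
  rw [vecMulVec_mul, trace_vecMulVec, dotProduct_comm, dotProduct_mulVec]

section UnitSphere

variable {ι : Type*} [Fintype ι]

/-- The paper's `inf g` for the quadratic form `g x = x†Gx`. -/
noncomputable def sphereInf (G : Matrix ι ι ℂ) : ℝ :=
  ⨅ x : {x : ι → ℂ // star x ⬝ᵥ x = 1}, (star x.1 ⬝ᵥ G *ᵥ x.1).re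

theorem star_dotProduct_self_eq_norm_sq (v : ι → ℂ) :
    star v ⬝ᵥ v = ((‖WithLp.toLp 2 v‖ ^ 2 : ℝ) : ℂ) := by
  rw [dotProduct_comm, ← EuclideanSpace.inner_toLp_toLp, inner_self_eq_norm_sq_to_K]
  push_cast
  rfl

theorem norm_toLp_eq_one {v : ι → ℂ} (hv : star v ⬝ᵥ v = 1) : ‖WithLp.toLp 2 v‖ = 1 := by
  rw [star_dotProduct_self_eq_norm_sq] at hv
  exact (pow_eq_one_iff_of_nonneg (norm_nonneg _) two_ne_zero).mp (by exact_mod_cast hv)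

theorem bddBelow_range_re_dotProduct_mulVec (G : Matrix ι ι ℂ) :
    BddBelow (Set.range fun x : {x : ι → ℂ // star x ⬝ᵥ x = 1} => (star x.1 ⬝ᵥ G *ᵥ x.1).re) := by
  obtain ⟨c, hc⟩ := (isCompact_sphere (0 : EuclideanSpace ℂ ι) 1).bddBelow_image
    (f := fun v => (star v.ofLp ⬝ᵥ G *ᵥ v.ofLp).re) (by fun_prop)
  refine ⟨c, ?_⟩
  rintro _ ⟨x, rfl⟩
  exact hc ⟨WithLp.toLp 2 x.1, by simpa using norm_toLp_eq_one x.2, rfl⟩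

theorem sphereInf_mul_norm_sq_le (G : Matrix ι ι ℂ) (v : ι → ℂ) :
    sphereInf G * ‖WithLp.toLp 2 v‖ ^ 2 ≤ (star v ⬝ᵥ G *ᵥ v).re := by
  rcases eq_or_ne v 0 with rfl | hv
  · simp
  set r := ‖WithLp.toLp 2 v‖
  have hr : 0 < r := norm_pos_iff.mpr (by simpa using hv)
  set u := (r⁻¹ : ℂ) • v
  have hu : star u ⬝ᵥ u = 1 := by
    have : (r : ℂ) ≠ 0 := by exact_mod_cast hr.ne'
    simp only [u, star_smul, smul_dotProduct, dotProduct_smul, star_dotProduct_self_eq_norm_sq,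
      star_inv₀, RCLike.star_def, Complex.conj_ofReal, Complex.ofReal_pow, smul_eq_mul]
    field_simp
    rfl
  have huGu : star u ⬝ᵥ G *ᵥ u = (r⁻¹ ^ 2 : ℝ) * (star v ⬝ᵥ G *ᵥ v) := by
    simp only [u, star_smul, smul_dotProduct, mulVec_smul, dotProduct_smul, star_inv₀,
      RCLike.star_def, Complex.conj_ofReal, smul_eq_mul, inv_pow, Complex.ofReal_inv,
      Complex.ofReal_pow]
    ring
  have h := ciInf_le (bddBelow_range_re_dotProduct_mulVec G) ⟨u, hu⟩
  rw [huGu, Complex.re_ofReal_mul] at h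
  calc sphereInf G * r ^ 2 ≤ r⁻¹ ^ 2 * (star v ⬝ᵥ G *ᵥ v).re * r ^ 2 := by gcongr; exact h
    _ = (star v ⬝ᵥ G *ᵥ v).re := by field_simp

theorem posSemidef_sub_sphereInf_smul_one [DecidableEq ι] {G : Matrix ι ι ℂ}
    (hG : G.IsHermitian) : (G - sphereInf G • (1 : Matrix ι ι ℂ)).PosSemidef := by
  refine .of_dotProduct_mulVec_nonneg (hG.sub (isHermitian_one.smul (IsSelfAdjoint.all _)))
    fun v => ?_
  rw [sub_mulVec, dotProduct_sub, smul_mulVec, one_mulVec, dotProduct_smul,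
    star_dotProduct_self_eq_norm_sq, sub_nonneg, Complex.le_def]
  constructor
  · rw [Complex.smul_re, Complex.ofReal_re, smul_eq_mul]
    exact sphereInf_mul_norm_sq_le G v
  · rw [Complex.smul_im, Complex.ofReal_im, smul_zero]
    exact (hG.im_star_dotProduct_mulVec_self v).symm

theorem sphereInf_le_re_trace_mul [DecidableEq ι] {G M : Matrix ι ι ℂ} (hG : G.IsHermitian)
    (hM : M.PosSemidef) (htr : M.trace = 1) : sphereInf G ≤ ((G * M).trace).re := by
  have h := (posSemidef_sub_sphereInf_smul_one hG).trace_mul_nonneg hM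
  rw [sub_mul, trace_sub, smul_mul, one_mul, trace_smul, htr, sub_nonneg, Complex.le_def] at h
  simpa using h.1

theorem sphereInf_nonneg {G : Matrix ι ι ℂ} (hG : G.PosSemidef) : 0 ≤ sphereInf G :=
  Real.iInf_nonneg fun x => (Complex.nonneg_iff.mp (hG.dotProduct_mulVec_nonneg x.1)).1

theorem sphereInf_smul_one [Nonempty ι] [DecidableEq ι] (c : ℝ) :
    sphereInf (c • (1 : Matrix ι ι ℂ)) = c := by
  obtain ⟨i⟩ := ‹Nonempty ι›
  have : Nonempty {x : ι → ℂ // star x ⬝ᵥ x = 1} := ⟨⟨Pi.single i 1, by simp⟩⟩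
  rw [sphereInf]
  refine (iInf_congr fun x => ?_).trans ciInf_const
  simp [smul_mulVec, x.2]

end UnitSphere

theorem exists_posSemidef_representation_of_sphereInf_le {ι : Type*} [Fintype ι] [DecidableEq ι]
    [Nonempty ι] (L : Matrix ι ι ℂ → ℝ)
    (hadd : ∀ G H : Matrix ι ι ℂ, G.IsHermitian → H.IsHermitian → L (G + H) = L G + L H)
    (hsmul : ∀ (c : ℝ) (G : Matrix ι ι ℂ), G.IsHermitian → L (c • G) = c * L G)
    (hL : ∀ G : Matrix ι ι ℂ, G.IsHermitian → sphereInf G ≤ L G) :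
    ∃ M : Matrix ι ι ℂ, M.PosSemidef ∧ M.trace = 1 ∧
      ∀ G : Matrix ι ι ℂ, G.IsHermitian → L G = ((G * M).trace).re := by
  obtain ⟨f, hf⟩ := exists_dual_eq_on_selfAdjoint L hadd hsmul
  obtain ⟨M, hM⟩ := exists_eq_trace_mul f
  have hrep (G : Matrix ι ι ℂ) (hG : G.IsHermitian) : (G * M).trace = L G :=
    (hM G).symm.trans (hf G hG)
  have hscalar (c : ℝ) : c ≤ c * L 1 := by
    have hc : (c • (1 : Matrix ι ι ℂ)).IsHermitian := isHermitian_one.smul (IsSelfAdjoint.all _)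
    simpa [sphereInf_smul_one, hsmul c 1 isHermitian_one] using hL _ hc
  have hL1 : L 1 = 1 := by linarith [hscalar 1, hscalar (-1)]
  refine ⟨M, posSemidef_of_forall_dotProduct_mulVec_nonneg fun v => ?_, ?_,
    fun G hG => by rw [hrep G hG, Complex.ofReal_re]⟩
  · have hvv := posSemidef_vecMulVec_self_star v
    rw [← trace_vecMulVec_mul, hrep _ hvv.isHermitian, Complex.zero_le_real]
    exact (sphereInf_nonneg hvv).trans (hL _ hvv.isHermitian)
  · simpa [hL1] using hrep 1 isHermitian_one

/-- representation theorem for one-particle systems: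
a real-linear functional on the space of quadratic forms x ↦ x†Gx (G Hermitian)
on the unit sphere of ℂⁿ dominates the infimum of each quadratic form iff it is
represented as L(x ↦ x†Gx) = Tr(GM) for a Hermitian PSD matrix M of trace 1.
(Since a Hermitian G is uniquely determined by the function x ↦ x†Gx on the
sphere, we parametrise the elements of F by their Hermitian matrices.) -/
theorem representation_one_particle
    {n : ℕ} (hn : 0 < n)
    (L : Matrix (Fin n) (Fin n) ℂ → ℝ)
    (hadd : ∀ G H : Matrix (Fin n) (Fin n) ℂ,
      G.IsHermitian → H.IsHermitian → L (G + H) = L G + L H)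
    (hsmul : ∀ (c : ℝ) (G : Matrix (Fin n) (Fin n) ℂ),
      G.IsHermitian → L (c • G) = c * L G) :
    (∀ G : Matrix (Fin n) (Fin n) ℂ, G.IsHermitian →
        (⨅ x : {x : Fin n → ℂ // star x ⬝ᵥ x = 1}, ((star x.1 ⬝ᵥ G *ᵥ x.1).re : ℝ)) ≤ L G)
      ↔
    (∃ M : Matrix (Fin n) (Fin n) ℂ, M.PosSemidef ∧ M.trace = 1 ∧
        ∀ G : Matrix (Fin n) (Fin n) ℂ, G.IsHermitian → L G = ((G * M).trace).re) := by
  have : Nonempty (Fin n) := ⟨⟨0, hn⟩⟩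
  refine ⟨exists_posSemidef_representation_of_sphereInf_le L hadd hsmul, ?_⟩
  rintro ⟨M, hM, htr, hrep⟩ G hG
  exact (hrep G hG).symm ▸ sphereInf_le_re_trace_mul hG hM htr
end

section
/- Let W be the 4×4 Hermitian matrix with diagonal (0.25, 2.25, 2.25, 0.25) and entries W₁₄ = W₄₁ = −1, W₂₃ = W₃₂ = −1, all other off-diagonal entries 0. Then its eigenvalues are {−0.75, 1.25, 1.25, 3.25}; in particular Tr(W ρ_e) = −0.75 < 0 for the density matrix ρ_e = (1/2)(e₁+e₄)(e₁+e₄)ᵀ, while (x⊗y)†W(x⊗y) ≥ 0.25 for all unit vectors x, y ∈ ℂ². -/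
open Matrix

/-- The entanglement witness W of Eq. (34). -/
noncomputable def Wwit : Matrix (Fin 4) (Fin 4) ℂ :=
  !![1/4, 0, 0, -1; 0, 9/4, -1, 0; 0, -1, 9/4, 0; -1, 0, 0, 1/4]

/-- The maximally entangled state ρ_e = (1/2)(e₁+e₄)(e₁+e₄)ᵀ. -/
noncomputable def rhoE : Matrix (Fin 4) (Fin 4) ℂ :=
  !![1/2, 0, 0, 1/2; 0, 0, 0, 0; 0, 0, 0, 0; 1/2, 0, 0, 1/2]

/-- Reindexing Fin 2 × Fin 2 ≅ Fin 4 in the order (x₁y₁, x₁y₂, x₂y₁, x₂y₂). -/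
def pairIdx (p : Fin 2 × Fin 2) : Fin 4 := ⟨2 * p.1.val + p.2.val, by omega⟩

/-!
In the order e₁, e₄, e₂, e₃ the witness is block diagonal with blocks `!![1/4, -1; -1, 1/4]` and
`!![9/4, -1; -1, 9/4]`, whose eigenvalues are the diagonal entry ± 1; this gives the
characteristic polynomial and hence the spectrum.

On a product vector write a = x₁y₁, b = x₂y₂, u = x₁y₂, v = x₂y₁. The form equals
(1/4)‖x ⊗ y‖² + 2(|u|² + |v|²) − 2 Re(ā b) − 2 Re(ū v). Since ab = uv, both real parts are at
most |u||v|, and 4|u||v| ≤ 2(|u|² + |v|²).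
-/

open Polynomial Complex ComplexConjugate

theorem Matrix.IsHermitian.eigenvalues_eq_of_charpoly_eq {𝕜 n : Type*} [RCLike 𝕜] [Fintype n]
    [DecidableEq n] {A : Matrix n n 𝕜} (hA : A.IsHermitian) {s : Multiset ℝ}
    (h : A.charpoly = (s.map fun a : ℝ => X - C (a : 𝕜)).prod) :
    Finset.univ.val.map hA.eigenvalues = s := by
  apply Multiset.map_injective (RCLike.ofReal_injective (K := 𝕜))
  rw [Multiset.map_map, ← hA.roots_charpoly_eq_eigenvalues, h]
  simpa only [Multiset.map_map, Function.comp_def] using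
    roots_multiset_prod_X_sub_C (s.map (RCLike.ofReal : ℝ → 𝕜))

theorem Matrix.charpoly_of_fin_two_symm {R : Type*} [CommRing R] [Nontrivial R] (a b : R) :
    (!![a, b; b, a]).charpoly = (X - C (a + b)) * (X - C (a - b)) := by
  rw [charpoly_fin_two, trace_fin_two_of, det_fin_two_of]
  simp only [map_add, map_sub, map_mul]
  ring

def blocksEquiv : Fin 4 ≃ Fin 2 ⊕ Fin 2 where
  toFun := ![.inl 0, .inr 0, .inr 1, .inl 1]
  invFun := Sum.elim ![0, 3] ![1, 2]
  left_inv := by decide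
  right_inv := by decide

theorem reindex_blocksEquiv_Wwit :
    reindex blocksEquiv blocksEquiv Wwit =
      fromBlocks !![1/4, -1; -1, 1/4] 0 0 !![9/4, -1; -1, 9/4] := by
  ext (i | i) (j | j) <;> fin_cases i <;> fin_cases j <;> rfl

theorem charpoly_Wwit :
    Wwit.charpoly = (({-3/4, 5/4, 5/4, 13/4} : Multiset ℝ).map fun a : ℝ => X - C (a : ℂ)).prod := by
  rw [← charpoly_reindex blocksEquiv, reindex_blocksEquiv_Wwit, charpoly_fromBlocks_zero₁₂,
    charpoly_of_fin_two_symm, charpoly_of_fin_two_symm]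
  norm_num [mul_assoc]

theorem trace_Wwit_mul_rhoE : (Wwit * rhoE).trace = -3/4 := by
  simp [trace, Fin.sum_univ_four, Wwit, rhoE]
  norm_num

theorem Complex.re_conj_mul_add_re_conj_mul_le {a b u v : ℂ} (h : a * b = u * v) :
    (conj a * b).re + (conj u * v).re ≤ normSq u + normSq v := by
  have hab : (conj a * b).re ≤ ‖u‖ * ‖v‖ :=
    calc (conj a * b).re ≤ ‖conj a * b‖ := re_le_norm _
      _ = ‖u‖ * ‖v‖ := by rw [norm_mul, norm_conj, ← norm_mul, h, norm_mul]
  have huv : (conj u * v).re ≤ ‖u‖ * ‖v‖ :=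
    calc (conj u * v).re ≤ ‖conj u * v‖ := re_le_norm _
      _ = ‖u‖ * ‖v‖ := by rw [norm_mul, norm_conj]
  rw [normSq_eq_norm_sq, normSq_eq_norm_sq]
  linarith [two_mul_le_add_sq ‖u‖ ‖v‖]

theorem re_star_dotProduct_self {n : Type*} [Fintype n] (x : n → ℂ) :
    (star x ⬝ᵥ x).re = ∑ i, normSq (x i) := by
  simp [dotProduct, mul_re, normSq_apply]

theorem sum_normSq_mul_eq_mul_sum_normSq {m n : Type*} [Fintype m] [Fintype n]
    (x : m → ℂ) (y : n → ℂ) :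
    ∑ p : m × n, normSq (x p.1 * y p.2) = (∑ i, normSq (x i)) * ∑ j, normSq (y j) := by
  simp only [normSq_mul, Fintype.sum_prod_type, Finset.sum_mul_sum]

theorem re_star_dotProduct_Wwit_mulVec (v : Fin 2 × Fin 2 → ℂ) :
    (star v ⬝ᵥ Wwit.submatrix pairIdx pairIdx *ᵥ v).re =
      1/4 * ∑ p, normSq (v p) + 2 * (normSq (v (0, 1)) + normSq (v (1, 0)))
        - 2 * ((conj (v (0, 0)) * v (1, 1)).re + (conj (v (0, 1)) * v (1, 0)).re) := by
  simp [dotProduct, mulVec, Fintype.sum_prod_type, Fin.sum_univ_two, pairIdx, Wwit,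
    normSq_apply, mul_re]
  ring

/-- W has eigenvalues {−3/4, 5/4, 5/4, 13/4};
Tr(W ρ_e) = −3/4 < 0; and (x⊗y)†W(x⊗y) ≥ 1/4 on unit vectors x,y ∈ ℂ². -/
theorem witness_W_properties (hW : Wwit.IsHermitian) :
    (Finset.univ.val.map hW.eigenvalues = ({-3/4, 5/4, 5/4, 13/4} : Multiset ℝ)) ∧
    ((Wwit * rhoE).trace = (-3/4 : ℂ)) ∧
    (∀ x y : Fin 2 → ℂ, star x ⬝ᵥ x = 1 → star y ⬝ᵥ y = 1 →
      (1/4 : ℝ) ≤ (star (fun p : Fin 2 × Fin 2 => x p.1 * y p.2) ⬝ᵥ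
        (Wwit.submatrix pairIdx pairIdx) *ᵥ
          (fun p : Fin 2 × Fin 2 => x p.1 * y p.2)).re) := by
  refine ⟨hW.eigenvalues_eq_of_charpoly_eq charpoly_Wwit, trace_Wwit_mul_rhoE,
    fun x y hx hy => ?_⟩
  have hunit : ∑ p : Fin 2 × Fin 2, normSq (x p.1 * y p.2) = 1 := by
    rw [sum_normSq_mul_eq_mul_sum_normSq, ← re_star_dotProduct_self, ← re_star_dotProduct_self,
      hx, hy, one_re, one_mul]
  have hcross := re_conj_mul_add_re_conj_mul_le (a := x 0 * y 0) (b := x 1 * y 1)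
    (u := x 0 * y 1) (v := x 1 * y 0) (by ring)
  rw [re_star_dotProduct_Wwit_mulVec, hunit]
  linarith
end
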